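/- Let P be an adaptive ε_k-noisy sample of a compact set K with respect to a feature size function f, and let Q be the output of Declutter(P,k). Then for every x ∈ K there exists q ∈ Q with d(x,q) ≤ 5 ε_k f(x). -/

import Mathlib

open Metric

/-- Core loop of the Declutter algorithm: scan the (pre-sorted) list, keeping a point `p`
iff no previously kept point lies in the open ball `B(p, 2 f p)` (w.r.t. distance `d`). -/
noncomputable def declutterAux {X : Type*} (d : X → X → ℝ) (f : X → ℝ) :
    List X → List X → List X
  | Q, [] => Q
  | Q, p :: rest =>
    if ∀ q ∈ Q, 2 * f p ≤ d p q then declutterAux d f (Q ++ [p]) rest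
    else declutterAux d f Q rest

noncomputable def declutter {X : Type*} (d : X → X → ℝ) (f : X → ℝ) (L : List X) : List X :=
  declutterAux d f [] L

/-- `Q` is a possible output of the Declutter algorithm on `P`, with robust distance
function `f`: the points of `P` are processed in nondecreasing order of `f`
(ties broken arbitrarily). -/
def IsDeclutterOutput {X : Type*} (d : X → X → ℝ) (f : X → ℝ) (P : Finset X)
    (Q : List X) : Prop :=
  ∃ L : List X, L.Perm P.toList ∧ L.Pairwise (fun a b => f a ≤ f b) ∧ Q = declutter d f L

variable {X : Type*} [MetricSpace X]

/-- Sorted (nondecreasing) list of distances from `x` to the points of `P`. -/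
noncomputable def sortedDists (P : Finset X) (x : X) : List ℝ :=
  (P.val.map (dist x)).sort (· ≤ ·)

/-- The k-distance: root mean square of the distances to the k nearest neighbors in `P`. -/
noncomputable def kdist (P : Finset X) (k : ℕ) (x : X) : ℝ :=
  Real.sqrt ((1 / (k : ℝ)) * (((sortedDists P x).take k).map (fun r => r ^ 2)).sum)

/-- `P` is an ε_k-noisy sample of `K`:
(1) the k-distance is at most ε on `K`; (2) every point of the space is within
`kdist + ε` of `K`. -/
def NoisySample (P : Finset X) (k : ℕ) (K : Set X) (ε : ℝ) : Prop :=
  (∀ x ∈ K, kdist P k x ≤ ε) ∧ ∀ x : X, infDist x K ≤ kdist P k x + ε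

/-- `P` is an adaptive ε_k-noisy sample of `K` with respect to the feature size `f`. -/
def AdaptiveNoisySample (P : Finset X) (k : ℕ) (K : Set X) (f : X → ℝ) (ε : ℝ) : Prop :=
  (∀ x ∈ K, kdist P k x ≤ ε * f x) ∧
    ∀ y : X, ∀ ybar ∈ K, (∀ z ∈ K, dist y ybar ≤ dist y z) →
      infDist y K ≤ kdist P k y + ε * f ybar

/-!
For `x ∈ K`, its nearest sample point `p` satisfies `d(x, p) ≤ d_{P,k}(x)`, and since the
k-distance is 1-Lipschitz, `d_{P,k}(p) ≤ 2 d_{P,k}(x)`. Declutter either keeps `p` or discards it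
because of a kept `q` with `d(p, q) < 2 d_{P,k}(p)`; either way some kept `q` has
`d(x, q) ≤ 5 d_{P,k}(x) ≤ 5 ε f(x)`.

The Lipschitz bound: `d(y, ·) ≤ d(x, ·) + d(x, y)` pointwise, so the sorted distance lists are
dominated entrywise (order statistics are monotone), and Minkowski's inequality bounds the root
mean square of the shifted `k` smallest distances of `x`.
-/

namespace Multiset

variable {α : Type*} [LinearOrder α]

theorem exists_sort_eq_cons_sort_erase {s : Multiset α} (hs : s ≠ 0) :
    ∃ a ∈ s, (∀ x ∈ s, a ≤ x) ∧
      s.sort (· ≤ ·) = a :: (s.erase a).sort (· ≤ ·) := by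
  obtain ⟨a, ha, hmin⟩ := s.toFinset.exists_min_image id (by simpa using hs)
  simp only [mem_toFinset, id] at ha hmin
  refine ⟨a, ha, hmin, ?_⟩
  conv_lhs => rw [← cons_erase ha]
  exact sort_cons _ _ _ fun b hb => hmin b (mem_of_mem_erase hb)

/-- An exchange argument: a matching of `s` below `t` can be rerouted so that the minimum of `s`
is matched with the minimum of `t`. -/
theorem Rel.erase_of_forall_le {s t : Multiset α} (h : Rel (· ≤ ·) s t) {a b : α}
    (ha : a ∈ s) (hamin : ∀ x ∈ s, a ≤ x) (hb : b ∈ t) (hbmin : ∀ y ∈ t, b ≤ y) :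
    a ≤ b ∧ Rel (· ≤ ·) (s.erase a) (t.erase b) := by
  rw [← cons_erase hb] at h
  obtain ⟨a₀, s', ha₀b, hrel, rfl⟩ := rel_cons_right.mp h
  refine ⟨(hamin a₀ (mem_cons_self _ _)).trans ha₀b, ?_⟩
  rcases eq_or_ne a₀ a with rfl | hne
  · rwa [erase_cons_head]
  have has' : a ∈ s' := (mem_cons.mp ha).resolve_left hne.symm
  rw [← cons_erase has'] at hrel
  obtain ⟨c, t', -, hrel', ht'⟩ := rel_cons_left.mp hrel
  have hc : c ∈ t := mem_of_mem_erase (ht' ▸ mem_cons_self c t')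
  rw [erase_cons_tail_of_mem has', ht']
  exact hrel'.cons (ha₀b.trans (hbmin c hc))

theorem Rel.forall₂_sort {s t : Multiset α} (h : Rel (· ≤ ·) s t) :
    List.Forall₂ (· ≤ ·) (s.sort (· ≤ ·)) (t.sort (· ≤ ·)) := by
  induction hn : card s generalizing s t with
  | zero =>
    obtain rfl := card_eq_zero.mp hn
    obtain rfl := rel_zero_left.mp h
    simp
  | succ n ih =>
    have hs : s ≠ 0 := card_pos.mp (by omega)
    have ht : t ≠ 0 := card_pos.mp (by rw [← card_eq_card_of_rel h]; omega)
    obtain ⟨a, ha, hamin, hsa⟩ := exists_sort_eq_cons_sort_erase hs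
    obtain ⟨b, hb, hbmin, htb⟩ := exists_sort_eq_cons_sort_erase ht
    obtain ⟨hab, hrel⟩ := h.erase_of_forall_le ha hamin hb hbmin
    rw [hsa, htb]
    exact .cons hab (ih hrel (by rw [card_erase_of_mem ha, hn]; rfl))

end Multiset

namespace List

theorem sq_sum_le_length_mul_sum_sq (l : List ℝ) :
    l.sum ^ 2 ≤ l.length * (l.map (· ^ 2)).sum := by
  simpa [← Fin.sum_univ_fun_getElem l (· ^ 2)] using
    sq_sum_le_card_mul_sum_sq (s := Finset.univ) (f := fun i : Fin l.length => l[i.1])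

theorem sqrt_sum_map_add_sq_le (l : List ℝ) {d : ℝ} (hd : 0 ≤ d) :
    √(l.map (fun a => (a + d) ^ 2)).sum ≤ √(l.map (· ^ 2)).sum + d * √l.length := by
  have hexpand : (l.map (fun a => (a + d) ^ 2)).sum
      = (l.map (· ^ 2)).sum + 2 * d * l.sum + l.length * d ^ 2 := by
    induction l with
    | nil => simp
    | cons a l ih => simp only [map_cons, sum_cons, ih, length_cons]; push_cast; ring
  have hA : 0 ≤ (l.map (· ^ 2)).sum := sum_nonneg (by simp [sq_nonneg])
  have hS : l.sum ≤ √l.length * √(l.map (· ^ 2)).sum := by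
    rw [← Real.sqrt_mul (Nat.cast_nonneg _)]
    exact (le_abs_self _).trans (Real.abs_le_sqrt (sq_sum_le_length_mul_sum_sq l))
  rw [Real.sqrt_le_left (by positivity), hexpand]
  nlinarith [Real.sq_sqrt hA, Real.sq_sqrt (Nat.cast_nonneg (α := ℝ) l.length),
    mul_le_mul_of_nonneg_left hS hd]

end List

section KDist

variable (P : Finset X) (k : ℕ)

theorem kdist_nonneg (x : X) : 0 ≤ kdist P k x := Real.sqrt_nonneg _

theorem length_sortedDists (x : X) : (sortedDists P x).length = P.card := by
  simp [sortedDists]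

theorem mem_sortedDists {x : X} {r : ℝ} :
    r ∈ sortedDists P x ↔ ∃ q ∈ P, dist x q = r := by
  simp [sortedDists]

theorem forall₂_sortedDists_le_map_add_dist (x y : X) :
    List.Forall₂ (· ≤ ·) (sortedDists P y) ((sortedDists P x).map (· + dist x y)) := by
  have hrel : Multiset.Rel (· ≤ ·) (P.val.map (dist y))
      ((P.val.map (dist x)).map (· + dist x y)) := by
    rw [Multiset.map_map, Multiset.rel_map]
    refine Multiset.rel_refl_of_refl_on fun q _ => ?_
    simpa [dist_comm x y, add_comm] using dist_triangle y x q
  rw [sortedDists, sortedDists, Multiset.map_sort _ _ (· ≤ ·) (· ≤ ·) (by simp)]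
  exact hrel.forall₂_sort

theorem exists_dist_le_kdist (hk : 1 ≤ k) (hkP : k ≤ P.card) (x : X) :
    ∃ p ∈ P, dist x p ≤ kdist P k x := by
  obtain ⟨p, hp, hmin⟩ := P.exists_min_image (dist x) (Finset.card_pos.mp (by omega))
  refine ⟨p, hp, ?_⟩
  set T := (sortedDists P x).take k
  have hT : T.length = k := by simp [T, length_sortedDists, hkP]
  have hlow : ∀ r ∈ T.map (· ^ 2), dist x p ^ 2 ≤ r := by
    simp only [List.mem_map, forall_exists_index, and_imp, forall_apply_eq_imp_iff₂]
    intro r hr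
    obtain ⟨q, hq, rfl⟩ := (mem_sortedDists P).mp (List.mem_of_mem_take hr)
    exact pow_le_pow_left₀ dist_nonneg (hmin q hq) 2
  have hsum := List.card_nsmul_le_sum _ _ hlow
  rw [List.length_map, hT, nsmul_eq_mul] at hsum
  have hk0 : (0 : ℝ) < k := by exact_mod_cast hk
  refine Real.le_sqrt_of_sq_le ?_
  rw [one_div, inv_mul_eq_div, le_div_iff₀ hk0]
  linarith

theorem kdist_le_kdist_add_dist (x y : X) : kdist P k y ≤ kdist P k x + dist x y := by
  set d := dist x y
  set T := (sortedDists P x).take k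
  have hsq :
      (((sortedDists P y).take k).map (· ^ 2)).sum ≤ (T.map (fun a => (a + d) ^ 2)).sum := by
    have hnonneg : ∀ r ∈ (sortedDists P y).take k, 0 ≤ r := fun r hr => by
      obtain ⟨q, -, rfl⟩ := (mem_sortedDists P).mp (List.mem_of_mem_take hr)
      exact dist_nonneg
    have h := (List.forall₂_and_left _ _).mpr
      ⟨hnonneg, List.forall₂_take k (forall₂_sortedDists_le_map_add_dist P x y)⟩
    rw [← List.map_take, List.forall₂_map_right_iff] at h
    refine List.Forall₂.sum_le_sum ?_
    rw [List.forall₂_map_left_iff, List.forall₂_map_right_iff]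
    exact h.imp fun a b ⟨ha, hab⟩ => pow_le_pow_left₀ ha hab 2
  have hlen : √((1 / (k : ℝ)) * T.length) ≤ 1 := by
    rw [Real.sqrt_le_one, one_div, inv_mul_eq_div]
    exact div_le_one_of_le₀ (by exact_mod_cast List.length_take_le _ _) (Nat.cast_nonneg _)
  calc kdist P k y ≤ √(1 / (k : ℝ)) * √(T.map (fun a => (a + d) ^ 2)).sum := by
        rw [kdist, ← Real.sqrt_mul (by positivity)]
        exact Real.sqrt_le_sqrt (mul_le_mul_of_nonneg_left hsq (by positivity))
    _ ≤ √(1 / (k : ℝ)) * (√(T.map (· ^ 2)).sum + d * √T.length) := by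
        gcongr
        exact T.sqrt_sum_map_add_sq_le dist_nonneg
    _ = kdist P k x + d * √((1 / (k : ℝ)) * T.length) := by
        rw [kdist, Real.sqrt_mul (by positivity), Real.sqrt_mul (by positivity)]; ring
    _ ≤ kdist P k x + d := by nlinarith [dist_nonneg (x := x) (y := y)]

end KDist

section Declutter

variable {Y : Type*} (d : Y → Y → ℝ) (f : Y → ℝ)

theorem mem_declutterAux_of_mem {q : Y} :
    ∀ {Q₀ : List Y} (L : List Y), q ∈ Q₀ → q ∈ declutterAux d f Q₀ L
  | _, [], hq => by rwa [declutterAux]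
  | Q₀, p :: rest, hq => by
    rw [declutterAux]
    split
    · exact mem_declutterAux_of_mem rest (List.mem_append_left _ hq)
    · exact mem_declutterAux_of_mem rest hq

theorem exists_mem_declutterAux_le {p : Y} (hp : d p p ≤ 2 * f p) :
    ∀ (Q₀ L : List Y), p ∈ L → ∃ q ∈ declutterAux d f Q₀ L, d p q ≤ 2 * f p
  | Q₀, p' :: rest, hpL => by
    rw [declutterAux]
    split
    case isTrue h =>
      rcases List.mem_cons.mp hpL with rfl | hrest
      · exact ⟨p, mem_declutterAux_of_mem d f rest (by simp), hp⟩
      · exact exists_mem_declutterAux_le hp _ rest hrest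
    case isFalse h =>
      rcases List.mem_cons.mp hpL with rfl | hrest
      · push Not at h
        obtain ⟨q, hq, hlt⟩ := h
        exact ⟨q, mem_declutterAux_of_mem d f rest hq, hlt.le⟩
      · exact exists_mem_declutterAux_le hp Q₀ rest hrest

variable {d f} in
theorem IsDeclutterOutput.exists_le {P : Finset Y} {Q : List Y} (hQ : IsDeclutterOutput d f P Q)
    {p : Y} (hpP : p ∈ P) (hp : d p p ≤ 2 * f p) : ∃ q ∈ Q, d p q ≤ 2 * f p := by
  obtain ⟨L, hperm, -, rfl⟩ := hQ
  exact exists_mem_declutterAux_le d f hp [] L (hperm.mem_iff.mpr (Finset.mem_toList.mpr hpP))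

end Declutter

theorem declutter_covers_adaptive_general (P : Finset X) (k : ℕ) (hk : 1 ≤ k)
    (hkP : k ≤ P.card) (K : Set X)
    (f : X → ℝ)
    (ε : ℝ) (hsample : AdaptiveNoisySample P k K f ε)
    (Q : List X) (hQ : IsDeclutterOutput (fun a b => dist a b) (kdist P k) P Q) :
    ∀ x ∈ K, ∃ q ∈ Q, dist x q ≤ 5 * ε * f x := by
  intro x hx
  obtain ⟨p, hpP, hxp⟩ := exists_dist_le_kdist P k hk hkP x
  obtain ⟨q, hqQ, hpq⟩ := hQ.exists_le hpP (by simpa using kdist_nonneg P k p)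
  have hkp : kdist P k p ≤ kdist P k x + dist x p := kdist_le_kdist_add_dist P k x p
  have hkx : kdist P k x ≤ ε * f x := hsample.1 x hx
  refine ⟨q, hqQ, ?_⟩
  calc dist x q ≤ dist x p + dist p q := dist_triangle x p q
    _ ≤ 5 * kdist P k x := by linarith
    _ ≤ 5 * ε * f x := by linarith

/-- Adaptive case: every point of `K` has a point of the Declutter output within
`5 ε f(x)`. -/
theorem declutter_covers_adaptive (P : Finset X) (k : ℕ) (hk : 1 ≤ k)
    (hkP : k ≤ P.card) (K : Set X) (hK : IsCompact K) (hKne : K.Nonempty)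
    (f : X → ℝ) (hfpos : ∀ x ∈ K, 0 < f x)
    (hflip : ∀ x ∈ K, ∀ y ∈ K, |f x - f y| ≤ dist x y)
    (ε : ℝ) (hsample : AdaptiveNoisySample P k K f ε)
    (Q : List X) (hQ : IsDeclutterOutput (fun a b => dist a b) (kdist P k) P Q) :
    ∀ x ∈ K, ∃ q ∈ Q, dist x q ≤ 5 * ε * f x :=
  declutter_covers_adaptive_general P k hk hkP K f ε hsample Q hQ
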